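/- There is a bijection between the set II_n of pairs of strictly increasing integer sequences (a₁ < … < a_k, b₁ < … < b_k) with 1 ≤ a_t, b_t ≤ n+1 and a_t < b_t for all t (k ranging over 0,…,n), and the set of monotone lattice paths from (0,0) to (n+1,n+1) using unit right and up steps that never pass above the diagonal. -/

import Mathlib

/-- `IIn n` : increasing couples of increasing integer sequences bounded by `1` and `n+1`:
pairs of strictly increasing lists `(a₁ < … < a_k, b₁ < … < b_k)` of equal length `k ≤ n`,
with `1 ≤ aₜ`, all `bₜ ≤ n+1`, and `aₜ < bₜ` componentwise. -/
def IIn (n : ℕ) : Set (List ℕ × List ℕ) :=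
  {p | p.1.length = p.2.length ∧ p.1.length ≤ n ∧
    p.1.Chain' (· < ·) ∧ p.2.Chain' (· < ·) ∧
    (∀ x ∈ p.1, 1 ≤ x) ∧ (∀ y ∈ p.2, y ≤ n + 1) ∧
    ∀ (t : ℕ) (h1 : t < p.1.length) (h2 : t < p.2.length), p.1[t] < p.2[t]}

/-- Monotone lattice paths from `(0,0)` to `(m,m)` never passing above the diagonal,
encoded as lists of booleans (`true` = right step, `false` = up step), with `m` steps of
each kind and each prefix containing at least as many right steps as up steps. -/
def DyckPaths (m : ℕ) : Set (List Bool) :=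
  {l | l.length = 2 * m ∧ l.count true = m ∧
    ∀ k : ℕ, (l.take k).count false ≤ (l.take k).count true}

/-!
A path that stays weakly below the diagonal is determined by its valleys, the points where an up
step is followed by a right step. The valleys `(x, y)` of such a path from `(0, 0)` to
`(n + 1, n + 1)` satisfy `1 ≤ y ≤ x ≤ n`, and read from left to right both of their coordinates
increase strictly; conversely every such sequence of points is the valley sequence of exactly one
path, which joins consecutive valleys by a run of right steps followed by a run of up steps.
Recording the valley `(x, y)` as the pair `(a, b) = (y, x + 1)` turns these conditions into the
ones defining `IIn n`.
-/

namespace LatticePath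

open List

/-- The path `l` starting at the point `(i, j)` never passes above the diagonal. -/
def BelowDiag : ℕ → ℕ → List Bool → Prop
  | _, _, [] => True
  | i, j, true :: l => BelowDiag (i + 1) j l
  | i, j, false :: l => j < i ∧ BelowDiag i (j + 1) l

/-- The pairs `(aₜ, bₜ)` are, from left to right, the valleys `(bₜ - 1, aₜ)` of a path to `(m, m)`
that lie beyond the point `(i, j)`; after a pair `(a, b)` that point is `(b, a)`. -/
def IsValleySeq (m : ℕ) : ℕ → ℕ → List ℕ → List ℕ → Prop
  | _, _, [], [] => True
  | i, j, a :: as, b :: bs => j < a ∧ a < b ∧ i < b ∧ b ≤ m ∧ IsValleySeq m b a as bs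
  | _, _, _, _ => False

def ofValleys (m : ℕ) : ℕ → ℕ → List ℕ → List ℕ → List Bool
  | i, j, a :: as, b :: bs =>
      replicate (b - 1 - i) true ++ replicate (a - j) false ++ true :: ofValleys m b a as bs
  | i, j, _, _ => replicate (m - i) true ++ replicate (m - j) false

/-- The valleys of the path `l` starting at `(i, j)`; the flag says whether the step that led to
`(i, j)` was a right step (it is `true` at the start, which is no valley). -/
def valleys : ℕ → ℕ → Bool → List Bool → List ℕ × List ℕ
  | _, _, _, [] => ([], [])
  | i, j, true, true :: l => valleys (i + 1) j true l
  | i, j, false, true :: l =>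
      (j :: (valleys (i + 1) j true l).1, (i + 1) :: (valleys (i + 1) j true l).2)
  | i, j, _, false :: l => valleys i (j + 1) false l

theorem belowDiag_iff_forall_take {i j : ℕ} {l : List Bool} (hji : j ≤ i) :
    BelowDiag i j l ↔ ∀ k, j + (l.take k).count false ≤ i + (l.take k).count true := by
  induction l generalizing i j with
  | nil => simpa [BelowDiag]
  | cons c l ih =>
    have forall_take_cons {P : List Bool → Prop} :
        (∀ k, P ((c :: l).take k)) ↔ P [] ∧ ∀ k, P (c :: l.take k) :=
      ⟨fun h => ⟨h 0, fun k => h (k + 1)⟩, fun h k => k.casesOn h.1 fun k => h.2 k⟩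
    rw [forall_take_cons (P := fun t => j + t.count false ≤ i + t.count true)]
    cases c
    · constructor
      · rintro ⟨hji', hl⟩
        refine ⟨by simpa, fun k => ?_⟩
        have := (ih hji').1 hl k
        simp only [count_cons_self, count_cons_of_ne Bool.false_ne_true]
        omega
      · rintro ⟨-, h⟩
        have hji' : j + 1 ≤ i := by simpa using h 0
        refine ⟨hji', (ih hji').2 fun k => ?_⟩
        have := h k
        simp only [count_cons_self, count_cons_of_ne Bool.false_ne_true] at this
        omega
    · simp only [BelowDiag, ih (Nat.le_succ_of_le hji), count_cons_self,
        count_cons_of_ne (by decide : true ≠ false), count_nil]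
      grind

theorem belowDiag_replicate_true_append {i j c : ℕ} {l : List Bool} :
    BelowDiag i j (replicate c true ++ l) ↔ BelowDiag (i + c) j l := by
  induction c generalizing i with
  | zero => rfl
  | succ c ih => rw [replicate_succ, cons_append, BelowDiag, ih, Nat.add_right_comm, add_assoc]

theorem belowDiag_replicate_false_append {i j c : ℕ} {l : List Bool} (h : j + c ≤ i) :
    BelowDiag i j (replicate c false ++ l) ↔ BelowDiag i (j + c) l := by
  induction c generalizing j with
  | zero => rfl
  | succ c ih =>
    rw [replicate_succ, cons_append, BelowDiag, ih (by omega), Nat.add_right_comm, add_assoc]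
    exact and_iff_right (by omega)

theorem valleys_replicate_true_append {i j c : ℕ} {l : List Bool} :
    valleys i j true (replicate c true ++ l) = valleys (i + c) j true l := by
  induction c generalizing i with
  | zero => rfl
  | succ c ih => rw [replicate_succ, cons_append, valleys, ih, Nat.add_right_comm, add_assoc]

theorem valleys_replicate_false_append {i j c : ℕ} {l : List Bool} :
    valleys i j false (replicate c false ++ l) = valleys i (j + c) false l := by
  induction c generalizing j with
  | zero => rfl
  | succ c ih => rw [replicate_succ, cons_append, valleys, ih, Nat.add_right_comm, add_assoc]

theorem valleys_replicate_false {i j c : ℕ} {r : Bool} :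
    valleys i j r (replicate c false) = ([], []) := by
  induction c generalizing j r with
  | zero => rfl
  | succ c ih => rw [replicate_succ, valleys, ih]

theorem IsValleySeq.mono {m i j i' j' : ℕ} {as bs : List ℕ} (h : IsValleySeq m i j as bs)
    (hi : i' ≤ i) (hj : j' ≤ j) : IsValleySeq m i' j' as bs := by
  match as, bs, h with
  | [], [], _ => trivial
  | _ :: _, _ :: _, ⟨hja, hab, hib, hbm, h⟩ => exact ⟨by omega, hab, by omega, hbm, h⟩

theorem IsValleySeq.length_le {m i j : ℕ} {as bs : List ℕ} (h : IsValleySeq m i j as bs) :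
    as.length ≤ m - 1 - j := by
  match as, bs, h with
  | [], [], _ => exact Nat.zero_le _
  | _ :: _, _ :: _, ⟨hja, hab, _, hbm, h⟩ =>
    have := h.length_le
    rw [length_cons]
    omega

theorem count_true_ofValleys {m i j : ℕ} {as bs : List ℕ} (h : IsValleySeq m i j as bs) :
    (ofValleys m i j as bs).count true = m - i := by
  match as, bs, h with
  | [], [], _ => simp [ofValleys, count_replicate]
  | _ :: _, _ :: _, ⟨_, _, hib, hbm, h⟩ =>
    simp only [ofValleys, count_append, count_cons_self, count_replicate_self,
      count_replicate, count_true_ofValleys h, beq_true, Bool.false_eq_true, ↓reduceIte]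
    omega

theorem count_false_ofValleys {m i j : ℕ} {as bs : List ℕ} (h : IsValleySeq m i j as bs) :
    (ofValleys m i j as bs).count false = m - j := by
  match as, bs, h with
  | [], [], _ => simp [ofValleys, count_replicate]
  | _ :: _, _ :: _, ⟨hja, hab, _, hbm, h⟩ =>
    simp only [ofValleys, count_append, count_cons_of_ne (by decide : true ≠ false),
      count_replicate_self, count_replicate, count_false_ofValleys h, beq_false, Bool.not_true,
      Bool.false_eq_true, ↓reduceIte]
    omega

theorem belowDiag_ofValleys {m i j : ℕ} {as bs : List ℕ} (h : IsValleySeq m i j as bs)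
    (hji : j ≤ i) (him : i ≤ m) : BelowDiag i j (ofValleys m i j as bs) := by
  match as, bs, h with
  | [], [], _ =>
    simp only [ofValleys]
    rw [belowDiag_replicate_true_append,
      ← append_nil (replicate _ false), belowDiag_replicate_false_append (by omega)]
    trivial
  | a :: _, b :: _, ⟨hja, hab, hib, hbm, h⟩ =>
    rw [ofValleys, append_assoc, belowDiag_replicate_true_append,
      belowDiag_replicate_false_append (by omega)]
    show BelowDiag (i + (b - 1 - i) + 1) _ _
    rw [show i + (b - 1 - i) + 1 = b by omega, show j + (a - j) = a by omega]
    exact belowDiag_ofValleys h hab.le hbm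

theorem valleys_ofValleys {m i j : ℕ} {as bs : List ℕ} (h : IsValleySeq m i j as bs) :
    valleys i j true (ofValleys m i j as bs) = (as, bs) := by
  match as, bs, h with
  | [], [], _ =>
    simp only [ofValleys]
    rw [valleys_replicate_true_append, valleys_replicate_false]
  | a :: _, b :: _, ⟨hja, hab, hib, hbm, h⟩ =>
    obtain ⟨c, hc⟩ : ∃ c, a - j = c + 1 := ⟨a - j - 1, by omega⟩
    rw [ofValleys, append_assoc, valleys_replicate_true_append, hc, replicate_succ, cons_append,
      valleys, valleys_replicate_false_append, valleys, show i + (b - 1 - i) + 1 = b by omega,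
      show j + 1 + c = a by omega, valleys_ofValleys h]

theorem isValleySeq_valleys {m i j j' : ℕ} {r : Bool} {l : List Bool} (hji : j ≤ i)
    (hl : BelowDiag i j l) (hm : i + l.count true = m) (hj' : j' ≤ j) (hr : r = false → j' < j) :
    IsValleySeq m i j' (valleys i j r l).1 (valleys i j r l).2 := by
  induction l generalizing i j j' r with
  | nil => trivial
  | cons c l ih =>
    cases c with
    | false =>
      obtain ⟨hlt, hl⟩ := hl
      rw [count_cons_of_ne (by decide)] at hm
      exact ih hlt hl hm (by omega) fun _ => by omega
    | true =>
      rw [count_cons_self] at hm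
      have hv := ih (i := i + 1) (j' := j) (r := true) (by omega) hl (by omega) le_rfl nofun
      cases r with
      | true => exact hv.mono (by omega) hj'
      | false => exact ⟨hr rfl, by omega, by omega, by omega, hv⟩

theorem head?_snd_valleys_false {i j : ℕ} {l : List Bool} :
    (valleys i j false l).2.head? = if 0 < l.count true then some (i + 1) else none := by
  induction l generalizing j with
  | nil => rfl
  | cons c l ih => cases c <;> simp [valleys, ih]

theorem ofValleys_eq_true_cons {m i j : ℕ} {as bs : List ℕ} (h : IsValleySeq m (i + 1) j as bs)
    (him : i < m) : ofValleys m i j as bs = true :: ofValleys m (i + 1) j as bs := by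
  match as, bs, h with
  | [], [], _ =>
    simp only [ofValleys]
    rw [show m - i = m - (i + 1) + 1 by omega, replicate_succ, cons_append]
  | _ :: _, b :: _, ⟨_, _, hib, _⟩ =>
    rw [ofValleys, ofValleys, show b - 1 - i = b - 1 - (i + 1) + 1 by omega, replicate_succ,
      cons_append, cons_append]

theorem ofValleys_eq_false_cons {m i j : ℕ} {as bs : List ℕ} (h : IsValleySeq m i j as bs)
    (hjm : j < m) (hb : bs.head? = if i < m then some (i + 1) else none) :
    ofValleys m i j as bs = false :: ofValleys m i (j + 1) as bs := by
  match as, bs, h with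
  | [], [], _ =>
    simp only [ofValleys]
    rw [Nat.sub_eq_zero_of_le (by simpa using hb), show m - j = m - (j + 1) + 1 by omega,
      replicate_succ]
    rfl
  | a :: _, b :: _, ⟨hja, _⟩ =>
    obtain rfl : b = i + 1 := by grind
    rw [ofValleys, ofValleys, show a - j = a - (j + 1) + 1 by omega, replicate_succ]
    simp

theorem ofValleys_valleys {m i j : ℕ} {r : Bool} {l : List Bool} (hji : j ≤ i)
    (hl : BelowDiag i j l) (hi : i + l.count true = m) (hj : j + l.count false = m) :
    ofValleys m i j (valleys i j r l).1 (valleys i j r l).2 = l := by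
  induction l generalizing i j r with
  | nil => simp_all [ofValleys, valleys]
  | cons c l ih =>
    cases c with
    | false =>
      obtain ⟨hlt, hl⟩ := hl
      rw [count_cons_of_ne (by decide)] at hi
      rw [count_cons_self] at hj
      have hv := isValleySeq_valleys (j' := j) (r := false) hlt hl hi (by omega) (by omega)
      have hb : (valleys i (j + 1) false l).2.head? = if i < m then some (i + 1) else none := by
        simp only [head?_snd_valleys_false, show 0 < l.count true ↔ i < m by omega]
      rw [valleys, ofValleys_eq_false_cons hv (by omega) hb, ih hlt hl hi (by omega)]
    | true =>
      rw [count_cons_self] at hi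
      rw [count_cons_of_ne (by decide)] at hj
      have hl' : BelowDiag (i + 1) j l := hl
      have IH := ih (r := true) (by omega) hl' (by omega) hj
      cases r with
      | true =>
        have hv := isValleySeq_valleys (m := m) (j' := j) (r := true) (by omega) hl' (by omega)
          le_rfl nofun
        rw [valleys, ofValleys_eq_true_cons hv (by omega), IH]
      | false => simp [valleys, ofValleys, IH]

def valleyEquiv (m : ℕ) :
    {p : List ℕ × List ℕ // IsValleySeq m 0 0 p.1 p.2} ≃
      {l : List Bool // l.count true = m ∧ l.count false = m ∧ BelowDiag 0 0 l} where
  toFun p := ⟨ofValleys m 0 0 p.1.1 p.1.2, by simpa using count_true_ofValleys p.2,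
    by simpa using count_false_ofValleys p.2, belowDiag_ofValleys p.2 le_rfl (Nat.zero_le m)⟩
  invFun l :=
    ⟨valleys 0 0 true l.1, isValleySeq_valleys le_rfl l.2.2.2 (by simpa using l.2.1) le_rfl nofun⟩
  left_inv p := Subtype.ext (valleys_ofValleys p.2)
  right_inv l :=
    Subtype.ext (ofValleys_valleys le_rfl l.2.2.2 (by simpa using l.2.1) (by simpa using l.2.2.1))

theorem isValleySeq_iff {m i j : ℕ} {as bs : List ℕ} :
    IsValleySeq m i j as bs ↔ Forall₂ (· < ·) as bs ∧ (j :: as).IsChain (· < ·) ∧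
      (i :: bs).IsChain (· < ·) ∧ ∀ b ∈ bs, b ≤ m := by
  induction as generalizing i j bs with
  | nil => cases bs <;> simp [IsValleySeq]
  | cons a as ih =>
    cases bs with
    | nil => simp [IsValleySeq]
    | cons b bs =>
      simp only [IsValleySeq, ih, forall₂_cons, isChain_cons_cons, forall_mem_cons]
      tauto

theorem mem_IIn_iff {n : ℕ} {p : List ℕ × List ℕ} :
    p ∈ IIn n ↔ IsValleySeq (n + 1) 0 0 p.1 p.2 := by
  obtain ⟨as, bs⟩ := p
  simp only [IIn, Set.mem_ofPred_eq, isValleySeq_iff, forall₂_iff_get, get_eq_getElem]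
  constructor
  · rintro ⟨hlen, -, has, hbs, ha, hb, hab⟩
    refine ⟨⟨hlen, hab⟩, isChain_cons.2 ⟨fun a h => ha a (mem_of_mem_head? h), has⟩,
      isChain_cons.2 ⟨fun b h => ?_, hbs⟩, hb⟩
    obtain ⟨bs, rfl⟩ : ∃ bs', bs = b :: bs' := by cases bs <;> simp_all
    have hpos : 0 < as.length := by simp [hlen]
    have := hab 0 hpos (by simp)
    have := ha _ (getElem_mem hpos)
    simp only [getElem_cons_zero] at *
    omega
  · rintro ⟨⟨hlen, hab⟩, has, hbs, hb⟩
    have hv : IsValleySeq (n + 1) 0 0 as bs :=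
      isValleySeq_iff.2 ⟨forall₂_iff_get.2 ⟨hlen, by simpa using hab⟩, has, hbs, hb⟩
    have hlen_le := hv.length_le
    refine ⟨hlen, by simpa using hlen_le, has.tail, hbs.tail, fun a h => ?_, hb, hab⟩
    exact (pairwise_cons.1 (isChain_iff_pairwise.1 has)).1 a h

theorem mem_DyckPaths_iff {m : ℕ} {l : List Bool} :
    l ∈ DyckPaths m ↔ l.count true = m ∧ l.count false = m ∧ BelowDiag 0 0 l := by
  rw [DyckPaths, Set.mem_ofPred_eq, belowDiag_iff_forall_take le_rfl,
    ← count_true_add_count_false]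
  simp only [zero_add]
  constructor <;> rintro ⟨h₁, h₂, h₃⟩ <;> exact ⟨by omega, by omega, h₃⟩

end LatticePath

open LatticePath in
theorem stmt13 (n : ℕ) :
    Nonempty (↥(IIn n) ≃ ↥(DyckPaths (n + 1))) :=
  ⟨(Equiv.subtypeEquivRight fun _ => mem_IIn_iff).trans <|
    (valleyEquiv (n + 1)).trans (Equiv.subtypeEquivRight fun _ => mem_DyckPaths_iff).symm⟩
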